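/- In the Solomon simultaneous-report mechanism, for any F > 0 sufficiently small (specifically F < u_a(C) - u_a(B) and F < u_b(B) - u_b(A)), the strategy profile in which both agents truthfully report the state in the first stage, and in the challenge stage the true mother asserts the true state while the non-mother matches the responder's report, is a subgame perfect equilibrium whose outcome allocates the baby to the true mother with no fines imposed on the equilibrium path. -/

import Mathlib

inductive SolAgent | a | b
deriving DecidableEq

inductive SolOutcome | A | B | C
deriving DecidableEq

inductive SolMsg | α | β
deriving DecidableEq

open SolAgent SolOutcome SolMsg

def SolAgent.other : SolAgent → SolAgent
  | SolAgent.a => SolAgent.b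
  | SolAgent.b => SolAgent.a

/-- Allocation implemented by an agreed report: A if α, B if β. -/
def outcomeOf : SolMsg → SolOutcome
  | SolMsg.α => SolOutcome.A
  | SolMsg.β => SolOutcome.B

/-- A strategy in the two-stage SR mechanism: a first-stage report when proposer,
a first-stage report when responder, and a challenge-stage message as a function of
the responder's first-stage report. -/
structure SolStrategy where
  repP : SolMsg
  repR : SolMsg
  chal : SolMsg → SolMsg

/-- Payoff to agent `i` when the proposer is `P` with challenge strategy `chal`,
given first-stage reports `Mp` (proposer) and `Mr` (responder).  Agreement implements
the agreed allocation with no fines; disagreement fines both `F`, then if the proposer's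
challenge message matches `Mr` the allocation `outcomeOf Mr` is implemented and the
responder's fine is refunded; otherwise `C` is implemented and both keep their fines. -/
def solPayoff (u : SolAgent → SolOutcome → ℝ) (F : ℝ) (P : SolAgent)
    (chal : SolMsg → SolMsg) (i : SolAgent) (Mp Mr : SolMsg) : ℝ :=
  if Mp = Mr then u i (outcomeOf Mr)
  else if chal Mr = Mr then u i (outcomeOf Mr) - (if i = P then F else 0)
  else u i SolOutcome.C - F

/-- Subgame perfect equilibrium: for each possible proposer assignment `P`, the
proposer's challenge message is optimal in every challenge subgame, and each agent's
first-stage report is optimal given the other's report and the challenge continuation. -/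
def SolSPE (u : SolAgent → SolOutcome → ℝ) (F : ℝ) (σ : SolAgent → SolStrategy) : Prop :=
  ∀ P : SolAgent,
    (∀ Mr m : SolMsg,
      (if m = Mr then u P (outcomeOf Mr) - F else u P SolOutcome.C - F) ≤
        (if (σ P).chal Mr = Mr then u P (outcomeOf Mr) - F else u P SolOutcome.C - F)) ∧
    (∀ m : SolMsg,
      solPayoff u F P (σ P).chal P m ((σ P.other).repR) ≤
        solPayoff u F P (σ P).chal P ((σ P).repP) ((σ P.other).repR)) ∧
    (∀ m : SolMsg,
      solPayoff u F P (σ P).chal P.other ((σ P).repP) m ≤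
        solPayoff u F P (σ P).chal P.other ((σ P).repP) ((σ P.other).repR))

/-!
In the challenge stage each proposer picks the better of "uphold" (`outcomeOf Mr`) and
"reject" (`C`): the mother upholds α and rejects β since `u a B < u a C < u a A`, and the
non-mother, for whom `C` is as bad as `A`, always upholds. Because α is upheld by both, a
proposer who contradicts it only pays the fine; a responder who contradicts it gets `C` with
a fine (non-mother, indifferent between `C` and `A`) or `B` (mother), neither better than `A`.
-/

section General

variable {u : SolAgent → SolOutcome → ℝ} {F : ℝ}

@[simp]
theorem solPayoff_self (P : SolAgent) (chal : SolMsg → SolMsg) (i : SolAgent) (M : SolMsg) :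
    solPayoff u F P chal i M M = u i (outcomeOf M) := if_pos rfl

theorem solPayoff_proposer_le_of_upheld (hF : 0 ≤ F) {chal : SolMsg → SolMsg} {Mr : SolMsg}
    (hup : chal Mr = Mr) (P : SolAgent) (Mp : SolMsg) :
    solPayoff u F P chal P Mp Mr ≤ solPayoff u F P chal P Mr Mr := by
  by_cases h : Mp = Mr
  · simp [h]
  · simp [solPayoff, h, hup, hF]

theorem challenge_le_of_best {v : SolOutcome → ℝ} {Mr c : SolMsg}
    (hup : c = Mr → v C ≤ v (outcomeOf Mr)) (hrej : c ≠ Mr → v (outcomeOf Mr) ≤ v C)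
    (m : SolMsg) :
    (if m = Mr then v (outcomeOf Mr) - F else v C - F) ≤
      (if c = Mr then v (outcomeOf Mr) - F else v C - F) := by
  by_cases hc : c = Mr
  · have := hup hc
    split_ifs <;> linarith
  · have := hrej hc
    split_ifs <;> linarith

end General

def truthfulProfile : SolAgent → SolStrategy
  | a => ⟨α, α, fun _ => α⟩
  | b => ⟨α, α, fun r => r⟩

namespace truthfulProfile

@[simp]
theorem repP (i : SolAgent) : (truthfulProfile i).repP = α := by cases i <;> rfl

@[simp]
theorem repR (i : SolAgent) : (truthfulProfile i).repR = α := by cases i <;> rfl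

theorem chal_α (i : SolAgent) : (truthfulProfile i).chal α = α := by cases i <;> rfl

variable {u : SolAgent → SolOutcome → ℝ} {F : ℝ}

theorem challenge_optimal
    (haAC : u a C < u a A) (haCB : u a B < u a C)
    (hbBA : u b A < u b B) (hbAC : u b A = u b C) (P : SolAgent) (Mr m : SolMsg) :
    (if m = Mr then u P (outcomeOf Mr) - F else u P C - F) ≤
      (if (truthfulProfile P).chal Mr = Mr then u P (outcomeOf Mr) - F else u P C - F) := by
  apply challenge_le_of_best <;> cases P <;> cases Mr <;>
    simp only [truthfulProfile, outcomeOf, forall_const, ne_eq, not_true_eq_false,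
      reduceCtorEq, not_false_eq_true, IsEmpty.forall_iff] <;> linarith

theorem responder_optimal (hF : 0 < F)
    (haAC : u a C < u a A) (haCB : u a B < u a C) (hbAC : u b A = u b C)
    (P : SolAgent) (m : SolMsg) :
    solPayoff u F P (truthfulProfile P).chal P.other α m ≤
      solPayoff u F P (truthfulProfile P).chal P.other α α := by
  cases P <;> cases m <;>
    simp only [solPayoff, truthfulProfile, SolAgent.other, outcomeOf, if_true, if_false,
      reduceCtorEq, sub_zero] <;> linarith

end truthfulProfile

theorem solomon_truthful_profile_is_SPE_general
    (u : SolAgent → SolOutcome → ℝ) (F : ℝ) (hF : 0 < F)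
    (haAC : u SolAgent.a SolOutcome.C < u SolAgent.a SolOutcome.A)
    (haCB : u SolAgent.a SolOutcome.B < u SolAgent.a SolOutcome.C)
    (hbBA : u SolAgent.b SolOutcome.A < u SolAgent.b SolOutcome.B)
    (hbAC : u SolAgent.b SolOutcome.A = u SolAgent.b SolOutcome.C)
    (σ : SolAgent → SolStrategy)
    (hσa : σ SolAgent.a = ⟨SolMsg.α, SolMsg.α, fun _ => SolMsg.α⟩)
    (hσb : σ SolAgent.b = ⟨SolMsg.α, SolMsg.α, fun r => r⟩) :
    SolSPE u F σ ∧
      ∀ P : SolAgent,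
        (σ P).repP = (σ P.other).repR ∧
        outcomeOf ((σ P.other).repR) = SolOutcome.A ∧
        ∀ i : SolAgent,
          solPayoff u F P (σ P).chal i ((σ P).repP) ((σ P.other).repR) =
            u i SolOutcome.A := by
  obtain rfl : σ = truthfulProfile := funext fun i => by cases i <;> assumption
  refine ⟨fun P => ⟨?_, ?_, ?_⟩,
    fun P => ⟨by simp, by simp [outcomeOf], fun i => by simp [outcomeOf]⟩⟩
  · exact truthfulProfile.challenge_optimal haAC haCB hbBA hbAC P
  · simpa using solPayoff_proposer_le_of_upheld hF.le (truthfulProfile.chal_α P) P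
  · simpa using truthfulProfile.responder_optimal hF haAC haCB hbAC P

/-- with state α (agent `a` the true mother) and `F > 0` sufficiently small
(`F < u a C - u a B` and `F < u b B - u b A`), the profile in which both agents report α
in the first stage (in either role), the true mother always asserts α in the challenge
stage, and the non-mother matches the responder's report, is a subgame perfect
equilibrium; on the equilibrium path the reports agree, the baby is allocated to the
true mother (`A`), and no fines are imposed. -/
theorem solomon_truthful_profile_is_SPE
    (u : SolAgent → SolOutcome → ℝ) (F : ℝ) (hF : 0 < F)
    (haAC : u SolAgent.a SolOutcome.C < u SolAgent.a SolOutcome.A)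
    (haCB : u SolAgent.a SolOutcome.B < u SolAgent.a SolOutcome.C)
    (hbBA : u SolAgent.b SolOutcome.A < u SolAgent.b SolOutcome.B)
    (hbAC : u SolAgent.b SolOutcome.A = u SolAgent.b SolOutcome.C)
    (hFa : F < u SolAgent.a SolOutcome.C - u SolAgent.a SolOutcome.B)
    (hFb : F < u SolAgent.b SolOutcome.B - u SolAgent.b SolOutcome.A)
    (σ : SolAgent → SolStrategy)
    (hσa : σ SolAgent.a = ⟨SolMsg.α, SolMsg.α, fun _ => SolMsg.α⟩)
    (hσb : σ SolAgent.b = ⟨SolMsg.α, SolMsg.α, fun r => r⟩) :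
    SolSPE u F σ ∧
      ∀ P : SolAgent,
        (σ P).repP = (σ P.other).repR ∧
        outcomeOf ((σ P.other).repR) = SolOutcome.A ∧
        ∀ i : SolAgent,
          solPayoff u F P (σ P).chal i ((σ P).repP) ((σ P.other).repR) =
            u i SolOutcome.A :=
  solomon_truthful_profile_is_SPE_general u F hF haAC haCB hbBA hbAC σ hσa hσb
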